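/- arXiv:2301.11687 — 2 statements merged into one kernel-verified Lean document; each statement's English description precedes it below -/
import Mathlib

section
/- Under the dataset collection assumption with the additional assumption that the behavior policy equals the expert policy (π^β = π^E), for any η ∈ [0,1] the NBCU policy π^NBCU (the BC policy of the union dataset D^U) satisfies E[V(π^E) − V(π^NBCU)] ≤ min{H, (4/9)|S|H²/N_tot}, where the expectation is over the randomness of the dataset collection. -/
open Finset

/-- An episodic MDP `M = (S, A, P, r, H, ρ)` with finite state space `S`, finite action
space `A`, horizon `H`, initial state distribution `ρ`, non-stationary transitions `P` and
rewards `r` taking values in `[0,1]`.  Time steps are indexed by `0, 1, …, H-1`. -/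
structure MDP (S A : Type) [Fintype S] [Fintype A] where
  H : ℕ
  ρ : S → ℝ
  P : ℕ → S → A → S → ℝ
  r : ℕ → S → A → ℝ
  ρ_nonneg : ∀ s, 0 ≤ ρ s
  ρ_sum : ∑ s, ρ s = 1
  P_nonneg : ∀ h s a s', 0 ≤ P h s a s'
  P_sum : ∀ h s a, ∑ s', P h s a s' = 1
  r_nonneg : ∀ h s a, 0 ≤ r h s a
  r_le_one : ∀ h s a, r h s a ≤ 1

variable {S A : Type} [Fintype S] [Fintype A] [DecidableEq S] [DecidableEq A]

/-- A (time-dependent, stochastic) policy: `π h s a` is the probability of action `a`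
at state `s` in step `h`. -/
def IsPolicy (π : ℕ → S → A → ℝ) : Prop :=
  (∀ h s a, 0 ≤ π h s a) ∧ (∀ h s, ∑ a, π h s a = 1)

/-- A deterministic policy: at each step and state it puts all mass on a single action. -/
def IsDetPolicy (π : ℕ → S → A → ℝ) : Prop :=
  ∃ f : ℕ → S → A, ∀ h s a, π h s a = if a = f h s then 1 else 0

/-- The state distribution `d^π_h(s)` of policy `π` at step `h`. -/
noncomputable def dState (M : MDP S A) (π : ℕ → S → A → ℝ) : ℕ → S → ℝ
  | 0 => M.ρ
  | h + 1 => fun s' => ∑ s, ∑ a, dState M π h s * π h s a * M.P h s a s'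

/-- The state-action distribution `d^π_h(s, a)` of policy `π` at step `h`. -/
noncomputable def dSA (M : MDP S A) (π : ℕ → S → A → ℝ) (h : ℕ) (s : S) (a : A) : ℝ :=
  dState M π h s * π h s a

/-- The policy value `V(π) = E[Σ_{h} r_h(s_h, a_h)] = Σ_h Σ_{(s,a)} d^π_h(s,a) r_h(s,a)`. -/
noncomputable def value (M : MDP S A) (π : ℕ → S → A → ℝ) : ℝ :=
  ∑ h ∈ Finset.range M.H, ∑ s, ∑ a, dSA M π h s a * M.r h s a

/-- Probability that rolling out policy `π` in MDP `M` produces trajectory `tr`. -/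
noncomputable def trajProb (M : MDP S A) (π : ℕ → S → A → ℝ) (tr : Fin M.H → S × A) : ℝ :=
  ∏ h : Fin M.H,
    ((if (h : ℕ) = 0 then M.ρ (tr h).1 else 1) * π h (tr h).1 (tr h).2 *
      (if hh : (h : ℕ) + 1 < M.H then M.P h (tr h).1 (tr h).2 (tr ⟨(h : ℕ) + 1, hh⟩).1 else 1))

/-- A labeled dataset of `N` trajectories of length `H`; the Boolean label records whether
the trajectory was generated by the expert (`true`) or by the behavior policy (`false`).
The expert dataset `D^E` is the sub-dataset labeled `true`, the supplementary dataset `D^S`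
is the sub-dataset labeled `false`, and the union dataset `D^U` is the whole dataset. -/
abbrev Dataset (S A : Type) (H N : ℕ) := Fin N → (Fin H → S × A) × Bool

/-- Probability of observing the labeled dataset `D` under Assumption 1 (each of the `N`
trajectories is independently rolled out from the expert `πE` with probability `η` and
from the behavior policy `πβ` with probability `1 - η`). -/
noncomputable def datasetProb (M : MDP S A) (πE πβ : ℕ → S → A → ℝ) (η : ℝ) {N : ℕ}
    (D : Dataset S A M.H N) : ℝ :=
  ∏ i, (if (D i).2 then η * trajProb M πE (D i).1 else (1 - η) * trajProb M πβ (D i).1)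

/-- Expectation of `f` over the randomness of the dataset collection (Assumption 1). -/
noncomputable def expect (M : MDP S A) (πE πβ : ℕ → S → A → ℝ) (η : ℝ) (N : ℕ)
    (f : Dataset S A M.H N → ℝ) : ℝ :=
  ∑ D : Dataset S A M.H N, datasetProb M πE πβ η D * f D

/-- Whether the step-`h` state-action pair of trajectory `tr` equals `(s, a)`. -/
def hit {H : ℕ} (tr : Fin H → S × A) (h : ℕ) (s : S) (a : A) : Bool :=
  if hh : h < H then decide (tr ⟨h, hh⟩ = (s, a)) else false

/-- `n_h(s, a)`: the number of trajectories of `D` (among those whose label is selected by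
`keep`) whose step-`h` state-action pair is `(s, a)`. -/
def countSA {H N : ℕ} (D : Dataset S A H N) (keep : Bool → Bool) (h : ℕ) (s : S) (a : A) : ℕ :=
  (Finset.univ.filter fun i : Fin N => (keep (D i).2 && hit (D i).1 h s a) = true).card

/-- The behavioral cloning policy determined by counts `n`:
`π_h(a|s) = n_h(s,a)/n_h(s)` if `n_h(s) > 0` and `1/|A|` otherwise. -/
noncomputable def bcFromCounts (n : ℕ → S → A → ℕ) : ℕ → S → A → ℝ := fun h s a =>
  if 0 < ∑ a', n h s a' then (n h s a : ℝ) / (∑ a', (n h s a' : ℝ))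
  else 1 / (Fintype.card A : ℝ)

/-- The behavioral cloning policy of the sub-dataset of `D` selected by `keep`
(`keep = fun b => b` gives BC on the expert dataset `D^E`;
 `keep = fun _ => true` gives BC on the union dataset `D^U`, i.e., NBCU). -/
noncomputable def bcPolicy {H N : ℕ} (D : Dataset S A H N) (keep : Bool → Bool) :
    ℕ → S → A → ℝ :=
  bcFromCounts (fun h s a => countSA D keep h s a)
/-
For a deterministic expert `f` and any policy `π`, the excess mass of the expert's state-action
distribution over that of `π` can grow, from one step to the next, only by the probability that
`π` leaves `f` at a state drawn from the expert's state distribution `d_h`. Summing over the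
horizon gives `V(π^E) - V(π) ≤ H Σ_h Σ_s d_h(s) (1 - π_h(f_h(s) | s))`.

When `π^β = π^E` every trajectory of `D^U` follows `f`, so the NBCU policy plays `f_h(s)` with
probability one at each state that some trajectory visits at step `h`. The deviation term is then
at most the indicator that no trajectory visits `s` at step `h`, an event of probability
`(1 - d_h(s))^N` because the trajectories are independent. Finally
`x (1 - x)^N ≤ x e^{-N x} ≤ 1 / (e N) ≤ 4 / (9 N)`.
-/

section Policies

variable {S A : Type} [Fintype A] {π : ℕ → S → A → ℝ}

theorem IsPolicy.le_one (hπ : IsPolicy π) (h : ℕ) (s : S) (a : A) : π h s a ≤ 1 := by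
  simpa [hπ.2] using Finset.single_le_sum (fun b _ => hπ.1 h s b) (Finset.mem_univ a)

theorem IsDetPolicy.isPolicy [DecidableEq A] (hπ : IsDetPolicy π) : IsPolicy π := by
  obtain ⟨f, hf⟩ := hπ
  refine ⟨fun h s a => ?_, fun h s => by simp [hf]⟩
  rw [hf]
  positivity

theorem MDP.nonempty_state [Fintype S] (M : MDP S A) : Nonempty S :=
  Finset.univ_nonempty_iff.1 (Finset.nonempty_of_sum_ne_zero (f := M.ρ) (by simp [M.ρ_sum]))

end Policies

theorem Fintype.sum_fun_fin_succ {α β : Type*} [Fintype α] [AddCommMonoid β] {n : ℕ}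
    (F : (Fin (n + 1) → α) → β) : ∑ tr, F tr = ∑ t : Fin n → α, ∑ x, F (Fin.snoc t x) := by
  rw [← (Fin.snocEquiv fun _ => α).sum_comp, Fintype.sum_prod_type, Finset.sum_comm]
  rfl

namespace NBCU

theorem mul_one_sub_pow_le {x : ℝ} (hx0 : 0 ≤ x) (hx1 : x ≤ 1) {N : ℕ} (hN : 0 < N) :
    x * (1 - x) ^ N ≤ 4 / (9 * N) := by
  have hN' : (0 : ℝ) < N := by exact_mod_cast hN
  have hpow : (1 - x) ^ N ≤ Real.exp (-(N * x)) := by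
    simpa [hN'.ne'] using Real.one_sub_div_pow_le_exp_neg (n := N) (t := N * x) (by nlinarith)
  have he : Real.exp (-1) ≤ 4 / 9 := by
    rw [Real.exp_neg, inv_le_comm₀ (Real.exp_pos 1) (by norm_num)]
    linarith [Real.exp_one_gt_d9]
  calc x * (1 - x) ^ N ≤ x * Real.exp (-(N * x)) := mul_le_mul_of_nonneg_left hpow hx0
    _ = (N * x) * Real.exp (-(N * x)) / N := by field_simp
    _ ≤ Real.exp (-1) / N := by gcongr; exact Real.mul_exp_neg_le_exp_neg_one _
    _ ≤ 4 / (9 * N) := by rw [div_le_div_iff₀ hN' (by positivity)]; nlinarith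

section StateDistribution

variable {S A : Type} [Fintype S] [Fintype A] (M : MDP S A) {π : ℕ → S → A → ℝ}

theorem dState_nonneg (hπ : IsPolicy π) (h : ℕ) (s : S) : 0 ≤ dState M π h s := by
  induction h generalizing s with
  | zero => exact M.ρ_nonneg s
  | succ h ih =>
    exact Finset.sum_nonneg fun s' _ => Finset.sum_nonneg fun a _ =>
      mul_nonneg (mul_nonneg (ih s') (hπ.1 h s' a)) (M.P_nonneg h s' a s)

theorem dSA_nonneg (hπ : IsPolicy π) (h : ℕ) (s : S) (a : A) : 0 ≤ dSA M π h s a :=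
  mul_nonneg (dState_nonneg M hπ h s) (hπ.1 h s a)

theorem sum_dSA (hπ : IsPolicy π) (h : ℕ) (s : S) : ∑ a, dSA M π h s a = dState M π h s := by
  simp [dSA, ← Finset.mul_sum, hπ.2]

theorem sum_dState (hπ : IsPolicy π) (h : ℕ) : ∑ s, dState M π h s = 1 := by
  induction h with
  | zero => exact M.ρ_sum
  | succ h ih =>
    calc ∑ s', dState M π (h + 1) s' = ∑ s, ∑ a, dSA M π h s a * ∑ s', M.P h s a s' := by
          simp only [dState, dSA, Finset.mul_sum]
          rw [Finset.sum_comm]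
          exact Finset.sum_congr rfl fun s _ => Finset.sum_comm
      _ = 1 := by simp only [M.P_sum, mul_one, sum_dSA M hπ, ih]

theorem dState_le_one (hπ : IsPolicy π) (h : ℕ) (s : S) : dState M π h s ≤ 1 :=
  sum_dState M hπ h ▸
    Finset.single_le_sum (fun s' _ => dState_nonneg M hπ h s') (Finset.mem_univ s)

theorem value_nonneg (hπ : IsPolicy π) : 0 ≤ value M π :=
  Finset.sum_nonneg fun h _ => Finset.sum_nonneg fun s _ => Finset.sum_nonneg fun a _ =>
    mul_nonneg (dSA_nonneg M hπ h s a) (M.r_nonneg h s a)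

theorem value_le (hπ : IsPolicy π) : value M π ≤ M.H := by
  calc value M π ≤ ∑ h ∈ Finset.range M.H, ∑ s, ∑ a, dSA M π h s a :=
        Finset.sum_le_sum fun h _ => Finset.sum_le_sum fun s _ => Finset.sum_le_sum fun a _ =>
          mul_le_of_le_one_right (dSA_nonneg M hπ h s a) (M.r_le_one h s a)
    _ = M.H := by simp [sum_dSA M hπ, sum_dState M hπ]

end StateDistribution

section Trajectories

variable {S A : Type} [Fintype S] [Fintype A] (M : MDP S A) {π : ℕ → S → A → ℝ}

noncomputable def pathProb (π : ℕ → S → A → ℝ) (n : ℕ) (tr : Fin n → S × A) : ℝ :=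
  ∏ h : Fin n,
    ((if (h : ℕ) = 0 then M.ρ (tr h).1 else 1) * π h (tr h).1 (tr h).2 *
      (if hh : (h : ℕ) + 1 < n then M.P h (tr h).1 (tr h).2 (tr ⟨(h : ℕ) + 1, hh⟩).1 else 1))

theorem trajProb_eq_pathProb (tr : Fin M.H → S × A) : trajProb M π tr = pathProb M π M.H tr :=
  rfl

variable {M} in
theorem pathProb_nonneg (hπ : IsPolicy π) {n : ℕ} (tr : Fin n → S × A) :
    0 ≤ pathProb M π n tr := by
  refine Finset.prod_nonneg fun i _ => mul_nonneg (mul_nonneg ?_ (hπ.1 _ _ _)) ?_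
  · split_ifs <;> simp [M.ρ_nonneg]
  · split_ifs <;> simp [M.P_nonneg]

theorem pathProb_one (tr : Fin 1 → S × A) :
    pathProb M π 1 tr = M.ρ (tr 0).1 * π 0 (tr 0).1 (tr 0).2 := by
  simp [pathProb]

theorem pathProb_snoc (n : ℕ) (tr : Fin (n + 1) → S × A) (x : S × A) :
    pathProb M π (n + 2) (Fin.snoc tr x) =
      pathProb M π (n + 1) tr * M.P n (tr (Fin.last n)).1 (tr (Fin.last n)).2 x.1 *
        π (n + 1) x.1 x.2 := by
  unfold pathProb
  rw [Fin.prod_univ_castSucc, Fin.prod_univ_castSucc, Fin.prod_univ_castSucc (n := n)]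
  have hinit (i : Fin n) (hi) :
      Fin.snoc (α := fun _ => S × A) tr x ⟨i + 1, hi⟩ = tr ⟨i + 1, by omega⟩ :=
    Fin.snoc_castSucc (α := fun _ => S × A) x tr ⟨i + 1, by omega⟩
  have hlast (hi) : Fin.snoc (α := fun _ => S × A) tr x ⟨n + 1, hi⟩ = x :=
    Fin.snoc_last (α := fun _ => S × A) x tr
  simp only [Fin.val_castSucc, Fin.snoc_castSucc, ite_mul, one_mul, add_lt_add_iff_right,
    Order.lt_add_one_iff, Fin.is_le', ↓reduceDIte, hinit, Fin.val_last, Std.le_refl, hlast,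
    mul_ite, Nat.add_eq_zero_iff, one_ne_zero, and_false, ↓reduceIte, Fin.snoc_last,
    lt_self_iff_false, mul_one, Order.add_one_le_iff, Fin.is_lt]
  split_ifs <;> ring

variable {M} in
theorem sum_pathProb_snoc (hπ : IsPolicy π) {n : ℕ} (tr : Fin n → S × A) :
    ∑ x, pathProb M π (n + 1) (Fin.snoc tr x) = pathProb M π n tr := by
  cases n with
  | zero => simp [pathProb, Fin.snoc, Fintype.sum_prod_type, ← Finset.mul_sum, hπ.2, M.ρ_sum]
  | succ n =>
    simp only [pathProb_snoc, Fintype.sum_prod_type, mul_assoc, ← Finset.mul_sum, hπ.2, mul_one,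
      M.P_sum]

variable {M} in
theorem sum_pathProb (hπ : IsPolicy π) (n : ℕ) : ∑ tr, pathProb M π n tr = 1 := by
  induction n with
  | zero => simp [pathProb]
  | succ n ih => simp only [Fintype.sum_fun_fin_succ, sum_pathProb_snoc hπ, ih]

theorem sum_pathProb_mul_last (n : ℕ) (g : S × A → ℝ) :
    ∑ tr : Fin (n + 1) → S × A, pathProb M π (n + 1) tr * g (tr (Fin.last n)) =
      ∑ s, ∑ a, dSA M π n s a * g (s, a) := by
  induction n generalizing g with
  | zero =>
    rw [← (Equiv.funUnique (Fin 1) (S × A)).symm.sum_comp, Fintype.sum_prod_type]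
    simp [pathProb_one, dSA, dState]
  | succ n ih =>
    let G (p : S × A) : ℝ := ∑ x : S × A, M.P n p.1 p.2 x.1 * π (n + 1) x.1 x.2 * g x
    calc _ = ∑ t : Fin (n + 1) → S × A, pathProb M π (n + 1) t * G (t (Fin.last n)) := by
          simp only [Fintype.sum_fun_fin_succ, pathProb_snoc, Fin.snoc_last, G, Finset.mul_sum,
            mul_assoc]
      _ = ∑ p : S × A, ∑ x : S × A, dSA M π n p.1 p.2 * (M.P n p.1 p.2 x.1 *
            π (n + 1) x.1 x.2 * g x) := by
          rw [ih G, ← Fintype.sum_prod_type']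
          simp only [G, Finset.mul_sum]
      _ = ∑ s, ∑ a, dSA M π (n + 1) s a * g (s, a) := by
          rw [Finset.sum_comm,
            ← Fintype.sum_prod_type' (f := fun s a => dSA M π (n + 1) s a * g (s, a))]
          refine Finset.sum_congr rfl fun x _ => ?_
          simp only [dSA, dState, Finset.sum_mul, Fintype.sum_prod_type]
          exact Finset.sum_congr rfl fun _ _ => Finset.sum_congr rfl fun _ _ => by ring

variable {M} in
theorem sum_pathProb_mul_apply (hπ : IsPolicy π) {n h : ℕ} (hh : h < n) (g : S × A → ℝ) :
    ∑ tr : Fin n → S × A, pathProb M π n tr * g (tr ⟨h, hh⟩) =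
      ∑ s, ∑ a, dSA M π h s a * g (s, a) := by
  induction n, hh using Nat.le_induction with
  | base => exact sum_pathProb_mul_last M h g
  | succ n hn ih =>
    rw [Fintype.sum_fun_fin_succ, ← ih]
    refine Finset.sum_congr rfl fun t _ => ?_
    simp only [← sum_pathProb_snoc hπ t, Finset.sum_mul]
    refine Finset.sum_congr rfl fun x _ => ?_
    rw [show (⟨h, _⟩ : Fin (n + 1)) = Fin.castSucc ⟨h, hn⟩ from rfl, Fin.snoc_castSucc]

end Trajectories

section ValueDifference

variable {S A : Type} [Fintype S] [Fintype A] (M : MDP S A) {πE π : ℕ → S → A → ℝ}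

theorem posPart_sub_mul_le {x y p : ℝ} (hx : 0 ≤ x) (hp0 : 0 ≤ p) (hp1 : p ≤ 1) :
    (x - y * p)⁺ ≤ (x - y)⁺ + x * (1 - p) := by
  have := posPart_nonneg (x - y)
  refine sup_le ?_ (by nlinarith)
  nlinarith [le_posPart (x - y)]

theorem sum_posPart_dState_succ_sub_le (h : ℕ) :
    ∑ s', (dState M πE (h + 1) s' - dState M π (h + 1) s')⁺ ≤
      ∑ s, ∑ a, (dSA M πE h s a - dSA M π h s a)⁺ := by
  have hsucc (s' : S) : dState M πE (h + 1) s' - dState M π (h + 1) s' =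
      ∑ s, ∑ a, (dSA M πE h s a - dSA M π h s a) * M.P h s a s' := by
    simp only [dState, dSA, ← Finset.sum_sub_distrib, sub_mul]
  calc ∑ s', (dState M πE (h + 1) s' - dState M π (h + 1) s')⁺
      ≤ ∑ s', ∑ s, ∑ a, (dSA M πE h s a - dSA M π h s a)⁺ * M.P h s a s' := by
        refine Finset.sum_le_sum fun s' _ => sup_le ?_ ?_
        · rw [hsucc]
          exact Finset.sum_le_sum fun s _ => Finset.sum_le_sum fun a _ =>
            mul_le_mul_of_nonneg_right (le_posPart _) (M.P_nonneg h s a s')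
        · exact Finset.sum_nonneg fun s _ => Finset.sum_nonneg fun a _ =>
            mul_nonneg (posPart_nonneg _) (M.P_nonneg h s a s')
    _ = ∑ s, ∑ a, (dSA M πE h s a - dSA M π h s a)⁺ := by
        rw [Finset.sum_comm]
        refine Finset.sum_congr rfl fun s _ => ?_
        rw [Finset.sum_comm]
        simp only [← Finset.mul_sum, M.P_sum, mul_one]

noncomputable def mismatchProb (M : MDP S A) (πE π : ℕ → S → A → ℝ) (f : ℕ → S → A) (h : ℕ) :
    ℝ :=
  ∑ s, dState M πE h s * (1 - π h s (f h s))

theorem mismatchProb_nonneg (hπE : IsPolicy πE) (hπ : IsPolicy π) (f : ℕ → S → A) (h : ℕ) :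
    0 ≤ mismatchProb M πE π f h :=
  Finset.sum_nonneg fun s _ =>
    mul_nonneg (dState_nonneg M hπE h s) (sub_nonneg.2 (hπ.le_one h s (f h s)))

variable [DecidableEq A] {f : ℕ → S → A}

theorem sum_posPart_dSA_sub_le (hf : ∀ h s a, πE h s a = if a = f h s then 1 else 0)
    (hπ : IsPolicy π) (h : ℕ) (s : S) :
    ∑ a, (dSA M πE h s a - dSA M π h s a)⁺ ≤
      (dState M πE h s - dState M π h s)⁺ + dState M πE h s * (1 - π h s (f h s)) := by
  rw [Finset.sum_eq_single (f h s)]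
  · simpa [dSA, hf] using posPart_sub_mul_le (y := dState M π h s)
      (dState_nonneg M (IsDetPolicy.isPolicy ⟨f, hf⟩) h s) (hπ.1 h s (f h s)) (hπ.le_one h s _)
  · intro a _ ha
    simpa [dSA, hf, ha] using mul_nonneg (dState_nonneg M hπ h s) (hπ.1 h s a)
  · simp

theorem sum_posPart_dSA_sub_le_sum_mismatchProb
    (hf : ∀ h s a, πE h s a = if a = f h s then 1 else 0) (hπ : IsPolicy π) (h : ℕ) :
    ∑ s, ∑ a, (dSA M πE h s a - dSA M π h s a)⁺ ≤
      ∑ g ∈ Finset.range (h + 1), mismatchProb M πE π f g := by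
  have hstep (h : ℕ) : ∑ s, ∑ a, (dSA M πE h s a - dSA M π h s a)⁺ ≤
      ∑ s, (dState M πE h s - dState M π h s)⁺ + mismatchProb M πE π f h := by
    rw [mismatchProb, ← Finset.sum_add_distrib]
    exact Finset.sum_le_sum fun s _ => sum_posPart_dSA_sub_le M hf hπ h s
  induction h with
  | zero => simpa [dState] using hstep 0
  | succ h ih =>
    rw [Finset.sum_range_succ]
    linarith [hstep (h + 1), sum_posPart_dState_succ_sub_le M (πE := πE) (π := π) h]

theorem value_sub_le_mul_sum_mismatchProb
    (hf : ∀ h s a, πE h s a = if a = f h s then 1 else 0) (hπ : IsPolicy π) :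
    value M πE - value M π ≤ M.H * ∑ g ∈ Finset.range M.H, mismatchProb M πE π f g := by
  have hmono (h : ℕ) (hh : h ∈ Finset.range M.H) :
      ∑ g ∈ Finset.range (h + 1), mismatchProb M πE π f g ≤
        ∑ g ∈ Finset.range M.H, mismatchProb M πE π f g :=
    Finset.sum_le_sum_of_subset_of_nonneg (Finset.range_subset_range.2 (Finset.mem_range.1 hh))
      fun g _ _ => mismatchProb_nonneg M (IsDetPolicy.isPolicy ⟨f, hf⟩) hπ f g
  calc value M πE - value M π
      = ∑ h ∈ Finset.range M.H, ∑ s, ∑ a, (dSA M πE h s a - dSA M π h s a) * M.r h s a := by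
        simp only [value, ← Finset.sum_sub_distrib, sub_mul]
    _ ≤ ∑ h ∈ Finset.range M.H, ∑ s, ∑ a, (dSA M πE h s a - dSA M π h s a)⁺ := by
        gcongr with h _ s _ a _
        nlinarith [le_posPart (dSA M πE h s a - dSA M π h s a),
          posPart_nonneg (dSA M πE h s a - dSA M π h s a), M.r_nonneg h s a, M.r_le_one h s a]
    _ ≤ ∑ h ∈ Finset.range M.H, ∑ g ∈ Finset.range M.H, mismatchProb M πE π f g :=
        Finset.sum_le_sum fun h hh =>
          (sum_posPart_dSA_sub_le_sum_mismatchProb M hf hπ h).trans (hmono h hh)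
    _ = M.H * ∑ g ∈ Finset.range M.H, mismatchProb M πE π f g := by simp

theorem apply_eq_of_trajProb_ne_zero
    (hf : ∀ h s a, πE h s a = if a = f h s then 1 else 0) {tr : Fin M.H → S × A}
    (htr : trajProb M πE tr ≠ 0) (h : Fin M.H) : (tr h).2 = f h (tr h).1 := by
  by_contra hne
  exact Finset.prod_ne_zero_iff.1 htr h (Finset.mem_univ h) (by simp [hf, hne])

end ValueDifference

section BehaviorCloning

variable {S A : Type} [Fintype A]

theorem bcFromCounts_nonneg (n : ℕ → S → A → ℕ) (h : ℕ) (s : S) (a : A) :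
    0 ≤ bcFromCounts n h s a := by
  unfold bcFromCounts
  split_ifs <;> positivity

theorem bcFromCounts_isPolicy [Nonempty A] (n : ℕ → S → A → ℕ) : IsPolicy (bcFromCounts n) := by
  refine ⟨bcFromCounts_nonneg n, fun h s => ?_⟩
  by_cases hpos : 0 < ∑ a, n h s a
  · have : (∑ a, (n h s a : ℝ)) ≠ 0 := by exact_mod_cast hpos.ne'
    simp only [bcFromCounts, if_pos hpos, ← Finset.sum_div, div_self this]
  · simp [bcFromCounts, if_neg hpos]

theorem bcFromCounts_eq_one {n : ℕ → S → A → ℕ} {h : ℕ} {s : S} {b : A} (hb : 0 < n h s b)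
    (hzero : ∀ a, a ≠ b → n h s a = 0) : bcFromCounts n h s b = 1 := by
  have hsum : ∑ a, n h s a = n h s b := Finset.sum_eq_single b (fun a _ => hzero a) (by simp)
  have hb' : (n h s b : ℝ) ≠ 0 := by exact_mod_cast hb.ne'
  simp only [bcFromCounts, hsum, if_pos hb, ← Nat.cast_sum, div_self hb']

end BehaviorCloning

section Datasets

variable {S A : Type} [DecidableEq S] [DecidableEq A]

theorem countSA_true {H N : ℕ} (D : Dataset S A H N) (h : Fin H) (s : S) (a : A) :
    countSA D (fun _ => true) h s a = #{i | (D i).1 h = (s, a)} := by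
  simp [countSA, hit]

theorem one_sub_bcPolicy_le_prod [Fintype A] {f : ℕ → S → A} {H N : ℕ} (D : Dataset S A H N)
    (hD : ∀ i h, ((D i).1 h).2 = f h ((D i).1 h).1) (h : Fin H) (s : S) :
    1 - bcPolicy D (fun _ => true) h s (f h s) ≤ ∏ i, if ((D i).1 h).1 = s then 0 else 1 := by
  by_cases hvisit : ∃ i, ((D i).1 h).1 = s
  · obtain ⟨i, hi⟩ := hvisit
    have hpos : 0 < countSA D (fun _ => true) h s (f h s) := by
      rw [countSA_true, Finset.card_pos]
      exact ⟨i, by simpa [Prod.ext_iff, hi] using hD i h⟩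
    have hzero (a : A) (ha : a ≠ f h s) : countSA D (fun _ => true) h s a = 0 := by
      rw [countSA_true, Finset.card_eq_zero, Finset.filter_eq_empty_iff]
      rintro j - hj
      exact ha (by simpa [hj] using hD j h)
    rw [bcPolicy, bcFromCounts_eq_one hpos hzero,
      Finset.prod_eq_zero (Finset.mem_univ i) (by simp [hi])]
    norm_num
  · push Not at hvisit
    simpa [hvisit, bcPolicy] using bcFromCounts_nonneg _ h s (f h s)

theorem bcPolicy_isPolicy [Fintype A] [Nonempty A] {H N : ℕ} (D : Dataset S A H N)
    (keep : Bool → Bool) : IsPolicy (bcPolicy D keep) :=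
  bcFromCounts_isPolicy _

end Datasets

section Expectation

variable {S A : Type} [Fintype S] [Fintype A] (M : MDP S A) {πE πβ : ℕ → S → A → ℝ} {η : ℝ}
  {N : ℕ}

noncomputable def labeledTrajProb (πE πβ : ℕ → S → A → ℝ) (η : ℝ)
    (t : (Fin M.H → S × A) × Bool) : ℝ :=
  if t.2 then η * trajProb M πE t.1 else (1 - η) * trajProb M πβ t.1

theorem datasetProb_eq_prod (D : Dataset S A M.H N) :
    datasetProb M πE πβ η D = ∏ i, labeledTrajProb M πE πβ η (D i) :=
  rfl

theorem expect_prod (g : (Fin M.H → S × A) × Bool → ℝ) :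
    expect M πE πβ η N (fun D => ∏ i, g (D i)) =
      (∑ t, labeledTrajProb M πE πβ η t * g t) ^ N := by
  simp only [_root_.expect, datasetProb_eq_prod, ← Finset.prod_mul_distrib]
  exact (Fintype.sum_pow (fun t => labeledTrajProb M πE πβ η t * g t) N).symm

theorem sum_labeledTrajProb_self_mul {π : ℕ → S → A → ℝ} (g : (Fin M.H → S × A) → ℝ) :
    ∑ t, labeledTrajProb M π π η t * g t.1 = ∑ tr, trajProb M π tr * g tr := by
  simp only [labeledTrajProb, Fintype.sum_prod_type, Fintype.sum_bool, if_true,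
    Bool.false_eq_true, if_false]
  exact Finset.sum_congr rfl fun tr _ => by ring

theorem labeledTrajProb_nonneg (hπE : IsPolicy πE) (hπβ : IsPolicy πβ) (hη : η ∈ Set.Icc 0 1)
    (t : (Fin M.H → S × A) × Bool) : 0 ≤ labeledTrajProb M πE πβ η t := by
  unfold labeledTrajProb
  split_ifs
  · exact mul_nonneg hη.1 (pathProb_nonneg hπE t.1)
  · exact mul_nonneg (sub_nonneg.2 hη.2) (pathProb_nonneg hπβ t.1)

theorem sum_labeledTrajProb (hπE : IsPolicy πE) (hπβ : IsPolicy πβ) :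
    ∑ t, labeledTrajProb M πE πβ η t = 1 := by
  simp only [labeledTrajProb, Fintype.sum_prod_type, Fintype.sum_bool, if_true,
    Bool.false_eq_true, if_false, Finset.sum_add_distrib, ← Finset.mul_sum,
    trajProb_eq_pathProb, sum_pathProb hπE, sum_pathProb hπβ]
  ring

theorem sum_datasetProb (hπE : IsPolicy πE) (hπβ : IsPolicy πβ) :
    ∑ D : Dataset S A M.H N, datasetProb M πE πβ η D = 1 := by
  simpa [_root_.expect, sum_labeledTrajProb M hπE hπβ] using
    expect_prod M (πE := πE) (πβ := πβ) (η := η) (N := N) fun _ => 1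

variable {M}

theorem expect_const (hπE : IsPolicy πE) (hπβ : IsPolicy πβ) (c : ℝ) :
    expect M πE πβ η N (fun _ => c) = c := by
  rw [_root_.expect, ← Finset.sum_mul, sum_datasetProb M hπE hπβ, one_mul]

theorem expect_mono (hπE : IsPolicy πE) (hπβ : IsPolicy πβ) (hη : η ∈ Set.Icc 0 1)
    {F G : Dataset S A M.H N → ℝ} (hFG : ∀ D, datasetProb M πE πβ η D ≠ 0 → F D ≤ G D) :
    expect M πE πβ η N F ≤ expect M πE πβ η N G := by
  refine Finset.sum_le_sum fun D _ => ?_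
  by_cases hD : datasetProb M πE πβ η D = 0
  · simp [hD]
  · exact mul_le_mul_of_nonneg_left (hFG D hD)
      (Finset.prod_nonneg fun i _ => labeledTrajProb_nonneg M hπE hπβ hη (D i))

theorem expect_const_mul (c : ℝ) (F : Dataset S A M.H N → ℝ) :
    expect M πE πβ η N (fun D => c * F D) = c * expect M πE πβ η N F := by
  simp only [_root_.expect, Finset.mul_sum]
  exact Finset.sum_congr rfl fun _ _ => by ring

theorem expect_sum {ι : Type} (s : Finset ι) (F : ι → Dataset S A M.H N → ℝ) :
    expect M πE πβ η N (fun D => ∑ i ∈ s, F i D) = ∑ i ∈ s, expect M πE πβ η N (F i) := by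
  simp only [_root_.expect, Finset.mul_sum]
  exact Finset.sum_comm

theorem trajProb_ne_zero_of_datasetProb_ne_zero {π : ℕ → S → A → ℝ} {D : Dataset S A M.H N}
    (hD : datasetProb M π π η D ≠ 0) (i : Fin N) : trajProb M π (D i).1 ≠ 0 := by
  have := Finset.prod_ne_zero_iff.1 hD i (Finset.mem_univ i)
  split_ifs at this <;> exact right_ne_zero_of_mul this

theorem expect_prod_unvisited {π : ℕ → S → A → ℝ} (hπ : IsPolicy π) [DecidableEq S]
    (h : Fin M.H) (s : S) :
    expect M π π η N (fun D => ∏ i, if ((D i).1 h).1 = s then 0 else 1) =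
      (1 - dState M π h s) ^ N := by
  rw [expect_prod M fun t => if (t.1 h).1 = s then 0 else 1,
    sum_labeledTrajProb_self_mul M fun tr => if (tr h).1 = s then 0 else 1]
  congr 1
  have hmarg : (∑ tr, trajProb M π tr * if (tr h).1 = s then 0 else 1) =
      ∑ s', ∑ a, dSA M π h s' a * if s' = s then 0 else 1 :=
    sum_pathProb_mul_apply hπ h.isLt fun p => if p.1 = s then 0 else 1
  have hsplit (s' : S) : dState M π h s' * (if s' = s then 0 else 1) =
      dState M π h s' - if s' = s then dState M π h s' else 0 := by
    split_ifs <;> ring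
  rw [hmarg]
  simp only [← Finset.sum_mul, sum_dSA M hπ, hsplit, Finset.sum_sub_distrib,
    Finset.sum_ite_eq', Finset.mem_univ, if_true, sum_dState M hπ]

end Expectation

section Imitation

variable {S A : Type} [Fintype S] [Fintype A] [DecidableEq S] [DecidableEq A]

theorem value_sub_bcPolicy_le [Nonempty A] (M : MDP S A) {πE : ℕ → S → A → ℝ}
    {f : ℕ → S → A} (hf : ∀ h s a, πE h s a = if a = f h s then 1 else 0) {N : ℕ}
    (D : Dataset S A M.H N) (hD : ∀ i h, ((D i).1 h).2 = f h ((D i).1 h).1) :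
    value M πE - value M (bcPolicy D fun _ => true) ≤
      M.H * ∑ h : Fin M.H, ∑ s, dState M πE h s * ∏ i, if ((D i).1 h).1 = s then 0 else 1 := by
  refine (value_sub_le_mul_sum_mismatchProb M hf (bcPolicy_isPolicy D _)).trans ?_
  rw [Finset.sum_range]
  unfold mismatchProb
  gcongr with h _ s
  · exact dState_nonneg M (IsDetPolicy.isPolicy ⟨f, hf⟩) h s
  · exact one_sub_bcPolicy_le_prod D hD h s

end Imitation

end NBCU

theorem nbcu_imitation_gap_expert_behavior_general
    (M : MDP S A) (πE : ℕ → S → A → ℝ)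
    (hdet : IsDetPolicy πE)
    (η : ℝ) (hη : η ∈ Set.Icc (0 : ℝ) 1) (Ntot : ℕ) (hN : 0 < Ntot) :
    expect M πE πE η Ntot
        (fun D => value M πE - value M (bcPolicy D (fun _ => true)))
      ≤ min (M.H : ℝ) ((4 / 9) * (Fintype.card S : ℝ) * (M.H : ℝ) ^ 2 / Ntot) := by
  obtain ⟨f, hf⟩ := hdet
  have hπE : IsPolicy πE := IsDetPolicy.isPolicy ⟨f, hf⟩
  have : Nonempty A := ⟨f 0 M.nonempty_state.some⟩
  refine le_min ?_ ?_
  · calc _ ≤ expect M πE πE η Ntot (fun _ => (M.H : ℝ)) :=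
          NBCU.expect_mono hπE hπE hη fun D _ => by
            linarith [NBCU.value_le M hπE,
              NBCU.value_nonneg M (NBCU.bcPolicy_isPolicy D fun _ => true)]
      _ = M.H := NBCU.expect_const hπE hπE _
  · calc _ ≤ expect M πE πE η Ntot (fun D => M.H * ∑ h : Fin M.H, ∑ s,
            dState M πE h s * ∏ i, if ((D i).1 h).1 = s then 0 else 1) :=
          NBCU.expect_mono hπE hπE hη fun D hD => NBCU.value_sub_bcPolicy_le M hf D fun i =>
            NBCU.apply_eq_of_trajProb_ne_zero M hf
              (NBCU.trajProb_ne_zero_of_datasetProb_ne_zero hD i)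
      _ = M.H * ∑ h : Fin M.H, ∑ s, dState M πE h s * (1 - dState M πE h s) ^ Ntot := by
          simp only [NBCU.expect_const_mul, NBCU.expect_sum, NBCU.expect_prod_unvisited hπE]
      _ ≤ M.H * ∑ _h : Fin M.H, ∑ _s : S, (4 / (9 * Ntot) : ℝ) := by
          gcongr with h _ s
          exact NBCU.mul_one_sub_pow_le (NBCU.dState_nonneg M hπE h s)
            (NBCU.dState_le_one M hπE h s) hN
      _ = _ := by
          rw [Finset.sum_const, Finset.sum_const, Finset.card_univ, Finset.card_univ,
            Fintype.card_fin, nsmul_eq_mul, nsmul_eq_mul]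
          field_simp

/-- **Theorem 3 (NBCU when the behavior policy equals the expert).**
Under Assumption 1 with `π^β = π^E`, for any `η ∈ [0,1]` the NBCU policy (BC on the union
dataset `D^U`) satisfies `E[V(π^E) − V(π^NBCU)] ≤ min{H, (4/9)|S|H²/N_tot}`. -/
theorem nbcu_imitation_gap_expert_behavior
    (M : MDP S A) (πE : ℕ → S → A → ℝ)
    (hπE : IsPolicy πE) (hdet : IsDetPolicy πE)
    (η : ℝ) (hη : η ∈ Set.Icc (0 : ℝ) 1) (Ntot : ℕ) (hN : 0 < Ntot) :
    expect M πE πE η Ntot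
        (fun D => value M πE - value M (bcPolicy D (fun _ => true)))
      ≤ min (M.H : ℝ) ((4 / 9) * (Fintype.card S : ℝ) * (M.H : ℝ) ^ 2 / Ntot) :=
  nbcu_imitation_gap_expert_behavior_general M πE hdet η hη Ntot hN
end

section
/- Let π¹ and π² be two policies in an episodic MDP and let η ∈ [0,1]. Define the mixture state-action distribution d^mix_h(s,a) = η d^{π¹}_h(s,a) + (1−η) d^{π²}_h(s,a), d^mix_h(s) = Σ_a d^mix_h(s,a), and the induced mixture policy π^mix_h(a|s) = d^mix_h(s,a)/d^mix_h(s) if d^mix_h(s) > 0 and 1/|A| otherwise. Then for all h ∈ [H] and all (s,a) ∈ S × A, d^{π^mix}_h(s,a) = d^mix_h(s,a). -/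
open Finset

variable {S A : Type} [Fintype S] [Fintype A] [DecidableEq S] [DecidableEq A]

/-!
Induction on the step `h`. If `π^mix` already has the mixture state distribution at step `h`,
then `d^mix_h(s) = d^{π^mix}_h(s)` is exactly the normaliser in the definition of `π^mix`, so
multiplying back gives `d^{π^mix}_h(s,a) = d^mix_h(s,a)`; where `d^mix_h(s) = 0` both sides
vanish, whatever the default `1/|A|`. The next state distribution is linear in the current
state-action distribution, which carries the mixture identity to step `h + 1`.
-/

theorem sum_mul_ite_div_sum {ι 𝕜 : Type*} [Fintype ι] [Field 𝕜] [LinearOrder 𝕜]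
    [IsStrictOrderedRing 𝕜] {f : ι → 𝕜} (hf : ∀ i, 0 ≤ f i) (c : 𝕜) (i : ι) :
    (∑ j, f j) * (if 0 < ∑ j, f j then f i / ∑ j, f j else c) = f i := by
  split_ifs with hpos
  · exact mul_div_cancel₀ _ hpos.ne'
  · have hzero : ∑ j, f j = 0 :=
      le_antisymm (not_lt.mp hpos) (sum_nonneg fun j _ => hf j)
    rw [hzero, zero_mul, (sum_eq_zero_iff_of_nonneg fun j _ => hf j).mp hzero i
      (mem_univ i)]

omit [DecidableEq S] [DecidableEq A] in
theorem dState_nonneg (M : MDP S A) {π : ℕ → S → A → ℝ} (hπ : ∀ h s a, 0 ≤ π h s a) :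
    ∀ h s, 0 ≤ dState M π h s
  | 0, s => M.ρ_nonneg s
  | h + 1, s' => sum_nonneg fun s _ => sum_nonneg fun a _ =>
      mul_nonneg (mul_nonneg (dState_nonneg M hπ h s) (hπ h s a)) (M.P_nonneg h s a s')

omit [DecidableEq S] [DecidableEq A] in
theorem dSA_nonneg (M : MDP S A) {π : ℕ → S → A → ℝ} (hπ : IsPolicy π) (h : ℕ) (s : S)
    (a : A) : 0 ≤ dSA M π h s a :=
  mul_nonneg (dState_nonneg M hπ.1 h s) (hπ.1 h s a)

omit [DecidableEq S] [DecidableEq A] in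
theorem sum_dSA (M : MDP S A) {π : ℕ → S → A → ℝ} (hπ : IsPolicy π) (h : ℕ) (s : S) :
    ∑ a, dSA M π h s a = dState M π h s := by
  simp only [dSA, ← mul_sum, hπ.2 h s, mul_one]

omit [DecidableEq S] [DecidableEq A] in
theorem dState_succ (M : MDP S A) (π : ℕ → S → A → ℝ) (h : ℕ) (s' : S) :
    dState M π (h + 1) s' = ∑ s, ∑ a, dSA M π h s a * M.P h s a s' :=
  rfl

omit [DecidableEq S] [DecidableEq A] in
theorem dState_succ_eq_add_of_dSA_eq_add (M : MDP S A) {π π1 π2 : ℕ → S → A → ℝ}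
    {α β : ℝ} {h : ℕ}
    (hπ : ∀ s a, dSA M π h s a = α * dSA M π1 h s a + β * dSA M π2 h s a) (s' : S) :
    dState M π (h + 1) s' = α * dState M π1 (h + 1) s' + β * dState M π2 (h + 1) s' := by
  simp only [dState_succ, hπ, add_mul, sum_add_distrib, mul_sum, mul_assoc]

/-- **Mixture policy lemma (state-action distribution).**
For policies `π¹, π²` and `η ∈ [0,1]`, let `d^mix_h(s,a) = η d^{π¹}_h(s,a) + (1−η) d^{π²}_h(s,a)`
and let `π^mix` be the induced mixture policy
(`π^mix_h(a|s) = d^mix_h(s,a)/d^mix_h(s)` if `d^mix_h(s) > 0`, and `1/|A|` otherwise).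
Then `d^{π^mix}_h(s,a) = d^mix_h(s,a)` for all steps `h` within the horizon and all `(s,a)`. -/
theorem mixture_policy_state_action_distribution
    (M : MDP S A) (π1 π2 : ℕ → S → A → ℝ) (h1 : IsPolicy π1) (h2 : IsPolicy π2)
    (η : ℝ) (hη : η ∈ Set.Icc (0 : ℝ) 1)
    (πmix : ℕ → S → A → ℝ)
    (hmix : ∀ h s a, πmix h s a =
      if 0 < ∑ a', (η * dSA M π1 h s a' + (1 - η) * dSA M π2 h s a')
      then (η * dSA M π1 h s a + (1 - η) * dSA M π2 h s a) /
        (∑ a', (η * dSA M π1 h s a' + (1 - η) * dSA M π2 h s a'))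
      else 1 / (Fintype.card A : ℝ)) :
    ∀ h, h < M.H → ∀ s a,
      dSA M πmix h s a = η * dSA M π1 h s a + (1 - η) * dSA M π2 h s a := by
  obtain ⟨hη0, hη1⟩ := hη
  set dMix : ℕ → S → A → ℝ := fun h s a => η * dSA M π1 h s a + (1 - η) * dSA M π2 h s a
  have dMix_nonneg : ∀ h s a, 0 ≤ dMix h s a := fun h s a =>
    add_nonneg (mul_nonneg hη0 (dSA_nonneg M h1 h s a))
      (mul_nonneg (sub_nonneg.mpr hη1) (dSA_nonneg M h2 h s a))
  have sum_dMix : ∀ h s, ∑ a, dMix h s a = η * dState M π1 h s + (1 - η) * dState M π2 h s :=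
    fun h s => by
      simp only [dMix, sum_add_distrib, ← mul_sum, sum_dSA M h1, sum_dSA M h2]
  have dSA_of_dState : ∀ h s,
      dState M πmix h s = η * dState M π1 h s + (1 - η) * dState M π2 h s →
      ∀ a, dSA M πmix h s a = dMix h s a := by
    intro h s hstate a
    rw [dSA, hmix, hstate, ← sum_dMix]
    exact sum_mul_ite_div_sum (dMix_nonneg h s) _ a
  have dState_eq : ∀ h s,
      dState M πmix h s = η * dState M π1 h s + (1 - η) * dState M π2 h s := by
    intro h
    induction h with
    | zero => intro s; simp only [dState]; ring
    | succ h ih =>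
      exact dState_succ_eq_add_of_dSA_eq_add M fun s => dSA_of_dState h s (ih s)
  exact fun h _ s => dSA_of_dState h s (dState_eq h s)
end
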